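/- arXiv:1707.05968 — 2 statements merged into one kernel-verified Lean document; each statement's English description precedes it below -/
import Mathlib

section
/- Let x ∈ {0,1}^n with x ≠ 0^n, let Last1(x) = max {i | x_i = 1}, and for j < Last1(x) with x_j = 0 define y^j = x_1 ... x_{j-1} 1 0^{n-j} (agreeing with x before position j, with a 1 at position j, and 0 afterwards). Then the set of minimal elements, with respect to the componentwise (subset) order, of the upper set {y ∈ {0,1}^n | y ≽_lex x} is exactly {x} ∪ {y^j | x_j = 0 and j < Last1(x)}. -/
def lexLe {n : ℕ} (x y : Fin n → Bool) : Prop :=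
  x = y ∨ ∃ j : Fin n, x j < y j ∧ ∀ k < j, x k = y k

/-- Componentwise (subset) order on `{0,1}^n`. -/
def subLe {n : ℕ} (x y : Fin n → Bool) : Prop :=
  ∀ i, x i = true → y i = true

/-- The vector `y^j = x₁ … x_{j-1} 1 0^{n-j}`. -/
def yvec {n : ℕ} (x : Fin n → Bool) (j : Fin n) : Fin n → Bool :=
  fun k => if k < j then x k else if k = j then true else false

theorem minimal_elements_lex {n : ℕ} (x : Fin n → Bool)
    (hx : x ≠ fun _ => false) (L : Fin n)
    (hL : x L = true ∧ ∀ i, x i = true → i ≤ L) :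
    {m | m ∈ {y | lexLe x y} ∧ ∀ y ∈ {y | lexLe x y}, subLe y m → y = m}
      = {x} ∪ {y | ∃ j : Fin n, x j = false ∧ j < L ∧ y = yvec x j} := by
  obtain ⟨hxL, hLmax⟩ := hL
  ext m
  simp only [Set.mem_setOf_eq, Set.mem_union, Set.mem_singleton_iff]
  constructor
  · rintro ⟨hm, hmin⟩
    rcases hm with heq | ⟨j, hj, hag⟩
    · left; exact heq.symm
    · right
      rw [Bool.lt_iff] at hj
      obtain ⟨hxj, hmj⟩ := hj
      have hyS : lexLe x (yvec x j) := Or.inr ⟨j,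
        by simp [yvec, Bool.lt_iff, hxj], fun k hk => by simp [yvec, hk]⟩
      have hsub : subLe (yvec x j) m := by
        intro i hi
        unfold yvec at hi
        split_ifs at hi with h1 h2
        · rw [hag i h1] at hi; exact hi
        · subst h2; exact hmj
      have hym := hmin (yvec x j) hyS hsub
      refine ⟨j, hxj, ?_, hym.symm⟩
      by_contra hjL
      push_neg at hjL
      have hjne : L ≠ j := by
        rintro rfl; rw [hxL] at hxj; simp at hxj
      have hjL' : L < j := lt_of_le_of_ne hjL hjne
      have hsubx : subLe x m := by
        intro i hi
        have : i < j := lt_of_le_of_lt (hLmax i hi) hjL'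
        rw [← hag i this]; exact hi
      have hxm := hmin x (Or.inl rfl) hsubx
      rw [← hxm, hxj] at hmj; simp at hmj
  · rintro (rfl | ⟨j, hxj, hjL, rfl⟩)
    · refine ⟨Or.inl rfl, ?_⟩
      intro y hy hsub
      rcases hy with heq | ⟨i, hi, hag⟩
      · exact heq.symm
      · rw [Bool.lt_iff] at hi
        exact absurd (hsub i hi.2) (by rw [hi.1]; simp)
    · refine ⟨Or.inr ⟨j, by simp [yvec, Bool.lt_iff, hxj],
        fun k hk => by simp [yvec, hk]⟩, ?_⟩
      intro y hy hsub
      have hyafter : ∀ k, j < k → y k = false := by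
        intro k hk
        by_contra h
        have hyk : y k = true := by simpa using h
        have := hsub k hyk
        unfold yvec at this
        rw [if_neg (not_lt.mpr hk.le), if_neg (by exact ne_of_gt hk)] at this
        exact absurd this (by simp)
      rcases hy with heq | ⟨i, hi, hag⟩
      · exfalso
        have h1 := hyafter L hjL
        rw [← heq, hxL] at h1; simp at h1
      · rw [Bool.lt_iff] at hi
        obtain ⟨hxi, hyi⟩ := hi
        have hij : i = j := by
          rcases lt_trichotomy i j with h | h | h
          · exfalso
            have := hsub i hyi
            unfold yvec at this
            rw [if_pos h, hxi] at this; simp at this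
          · exact h
          · exact absurd (hyafter i h) (by rw [hyi]; simp)
        subst hij
        funext k
        rcases lt_trichotomy k i with h | h | h
        · rw [← hag k h]; simp [yvec, h]
        · subst h; simp [yvec, hyi]
        · rw [hyafter k h]; simp [yvec, not_lt.mpr h.le, ne_of_gt h]
end

section
/- For any x ∈ {0,1}^n with x ≠ 0^n, the set M(x) of minimal elements (with respect to the componentwise subset order) of the set {y ∈ {0,1}^n | y ≽_lex x} has cardinality at most n. -/
theorem card_minimal_le {n : ℕ} (x : Fin n → Bool)
    (hx : x ≠ fun _ => false) :
    Set.ncard {m | m ∈ {y | lexLe x y} ∧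
        ∀ y ∈ {y | lexLe x y}, subLe y m → y = m} ≤ n := by
  classical
  obtain ⟨i0, hi0⟩ : ∃ i, x i = true := by
    by_contra h
    push_neg at h
    exact hx (funext fun i => by simpa using h i)
  set S := {m | m ∈ {y | lexLe x y} ∧ ∀ y ∈ {y | lexLe x y}, subLe y m → y = m} with hS
  set f : (Fin n → Bool) → Fin n := fun m => (Fin.find? (fun j => decide (x j ≠ m j))).getD i0 with hf
  have key : ∀ m ∈ S, m ≠ x → x (f m) = false ∧
      ∀ i, m i = if i < f m then x i else if i = f m then true else false := by
    intro m hm hmx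
    obtain ⟨hlex, hmin⟩ := hm
    have hex : ∃ j, x j ≠ m j := by
      by_contra h
      push_neg at h
      exact hmx (funext fun i => (h i).symm)
    cases hfind : Fin.find? (fun j => decide (x j ≠ m j)) with
    | none =>
      exact absurd hex (by simpa [Fin.find?_eq_none_iff] using hfind)
    | some j =>
      have hfm : f m = j := by rw [hf]; dsimp only; rw [hfind]; rfl
      have hpj : x j ≠ m j := by simpa using (Fin.mem_find?_iff.1 hfind).1
      have hmin' : ∀ k, k < j → x k = m k := by
        intro k hk
        by_contra hne
        exact absurd hk ((Fin.mem_find?_iff.1 hfind).2 _ · (by simpa using hne))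
      obtain ⟨j', hj'lt, hj'eq⟩ : ∃ j' : Fin n, x j' < m j' ∧ ∀ k < j', x k = m k := by
        rcases hlex with h | h
        · exact absurd h.symm hmx
        · exact h
      have hjj' : j = j' := by
        rcases lt_trichotomy j j' with h | h | h
        · exact absurd (hj'eq j h) hpj
        · exact h
        · exact absurd (ne_of_lt hj'lt) (by simpa using (Fin.mem_find?_iff.1 hfind).2 _ h)
      subst hjj'
      have hxj : x j = false ∧ m j = true := by
        revert hj'lt; cases hx' : x j <;> cases hm' : m j <;> simp
      set y : Fin n → Bool := fun i => if i ≤ j then m i else false with hy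
      have hylex : lexLe x y := by
        right
        refine ⟨j, ?_, fun k hk => ?_⟩
        · simp [hy, hxj.1, hxj.2]
        · simp [hy, le_of_lt hk, hj'eq k hk]
      have hysub : subLe y m := by
        intro i hi
        by_cases h : i ≤ j
        · simpa [hy, h] using hi
        · simp [hy, h] at hi
      have hym : y = m := hmin y hylex hysub
      refine ⟨hfm ▸ hxj.1, fun i => ?_⟩
      rw [hfm]
      rcases lt_trichotomy i j with h | h | h
      · simp [h, (hmin' i h).symm]
      · subst h; simp [hxj.2]
      · have : m i = y i := by rw [hym]
        rw [this]
        simp [hy, not_le.mpr h, h.ne', not_lt.mpr (le_of_lt h)]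
  have hfx : f x = i0 := by
    have : Fin.find? (fun j => decide (x j ≠ x j)) = none := by simp
    rw [hf]; simp only []; rw [this]; rfl
  have hinj : Set.InjOn f S := by
    intro m hm m' hm' heq
    by_cases h1 : m = x <;> by_cases h2 : m' = x
    · rw [h1, h2]
    · exfalso
      have := (key m' hm' h2).1
      rw [← heq, h1, hfx] at this
      rw [hi0] at this; exact Bool.true_eq_false.mp this
    · exfalso
      have := (key m hm h1).1
      rw [heq, h2, hfx] at this
      rw [hi0] at this; exact Bool.true_eq_false.mp this
    · funext i
      rw [(key m hm h1).2 i, (key m' hm' h2).2 i, heq]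
  have := Set.ncard_le_ncard_of_injOn f (fun a _ => Set.mem_univ (f a)) hinj Set.finite_univ
  simpa [Set.ncard_univ] using this
end
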